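/- arXiv:0908.3865 — 2 statements merged into one kernel-verified Lean document; each statement's English description precedes it below -/
import Mathlib

section
/- Strong Nullstellensatz for differencly closed fields: let K be a differencly closed difference field. Then for every perfect difference ideal 𝔱 ⊆ K{y₁,…,yₙ}, one has 𝔱 = I(V(𝔱)), where V(𝔱) ⊆ Kⁿ is the set of common zeros of 𝔱 and I(X) is the difference ideal of polynomials vanishing on X. -/
/-! Rabinowitsch's trick, carried out in the difference category. If `f ∉ 𝔱`, localize at the
submonoid `S` generated by the translates `σ f`; being `G`-stable, `S` lets the action extend to
`S⁻¹ K{y}`, and the extension of `𝔱` stays a perfect difference ideal: from `u * ∏ σᵢ(a) ^ kᵢ ∈ 𝔱`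
with `u ∈ S`, the element `t = σ₀⁻¹ u ∈ S` has `u ∣ σ₀(t) ^ k₀`, so `∏ σᵢ(t a) ^ kᵢ ∈ 𝔱` and
`t a ∈ 𝔱`. It is proper because perfectness keeps every product of translates of `f` out of `𝔱`.
Pulling it back along `y_{σ, n+1} ↦ 1 / σ f` gives a proper perfect difference ideal of
`K{y₁, …, yₙ₊₁}` containing `𝔱` and `y_{n+1} f - 1`. A common zero of it is a zero of `𝔱` at which
`f` does not vanish, contradicting `f ∈ I(V(𝔱))`.
-/

open MvPolynomial

universe u v

variable {G : Type u} [Group G]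

noncomputable def diffAct {A : Type v} [CommRing A] [MulSemiringAction G A] {n : ℕ} (σ : G) :
    MvPolynomial (G × Fin n) A →+* MvPolynomial (G × Fin n) A :=
  (MvPolynomial.rename (Prod.map (fun τ => σ * τ) id)).toRingHom.comp
    (MvPolynomial.map (MulSemiringAction.toRingHom G A σ))

def IsDiffIdeal {A : Type v} [CommRing A] [MulSemiringAction G A] {n : ℕ}
    (I : Ideal (MvPolynomial (G × Fin n) A)) : Prop :=
  ∀ σ : G, ∀ f ∈ I, diffAct σ f ∈ I

def IsPerfectDiffIdeal {A : Type v} [CommRing A] [MulSemiringAction G A] {n : ℕ}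
    (I : Ideal (MvPolynomial (G × Fin n) A)) : Prop :=
  IsDiffIdeal I ∧
    ∀ (f : MvPolynomial (G × Fin n) A) (m : ℕ) (σ : Fin m → G) (k : Fin m → ℕ),
      (∀ i, 1 ≤ k i) → (∏ i, (diffAct (σ i) f) ^ k i) ∈ I → f ∈ I

def IsStableIdeal (G : Type u) [Group G] {R : Type v} [CommRing R] [MulSemiringAction G R] (I : Ideal R) : Prop :=
  ∀ σ : G, ∀ a ∈ I, σ • a ∈ I

def IsPerfectIdeal (G : Type u) [Group G] {R : Type v} [CommRing R] [MulSemiringAction G R] (I : Ideal R) : Prop :=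
  IsStableIdeal G I ∧
    ∀ (a : R) (m : ℕ) (σ : Fin m → G) (k : Fin m → ℕ),
      (∀ i, 1 ≤ k i) → (∏ i, (σ i • a) ^ k i) ∈ I → a ∈ I

def IsSimpleDiffRing (G : Type u) (R : Type v) [Group G] [CommRing R] [MulSemiringAction G R] : Prop :=
  Nontrivial R ∧ ∀ I : Ideal R, IsStableIdeal G I → I = ⊥ ∨ I = ⊤

def IsPseudofield (G : Type u) (R : Type v) [Group G] [CommRing R] [MulSemiringAction G R] : Prop :=
  IsSimpleDiffRing G R ∧ ∀ a : R, ∃ x : R, a * x * a = a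

structure DiffRingExt (G : Type u) [Group G] : Type (max u (v + 1)) where
  carrier : Type v
  [ring : CommRing carrier]
  [act : MulSemiringAction G carrier]

attribute [instance] DiffRingExt.ring DiffRingExt.act

section DiffAct

variable {A : Type v} [CommRing A] [MulSemiringAction G A] {n : ℕ}

@[simp]
lemma diffAct_C (σ : G) (a : A) : diffAct (n := n) σ (C a) = C (σ • a) := by
  simp only [diffAct, RingHom.comp_apply, map_C, AlgHom.toRingHom_eq_coe, RingHom.coe_coe, rename_C]
  rfl

@[simp]
lemma diffAct_X (σ : G) (p : G × Fin n) : diffAct (A := A) σ (X p) = X (σ * p.1, p.2) := by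
  simp [diffAct, Prod.map]

lemma diffAct_diffAct (σ τ : G) (p : MvPolynomial (G × Fin n) A) :
    diffAct σ (diffAct τ p) = diffAct (σ * τ) p := by
  rw [← RingHom.comp_apply]
  congr 1
  exact ringHom_ext (fun a => by simp [mul_smul]) (fun p => by simp [mul_assoc])

lemma diffAct_one_apply (p : MvPolynomial (G × Fin n) A) : diffAct (1 : G) p = p := by
  rw [← RingHom.id_apply p]
  congr 1
  exact ringHom_ext (fun a => by simp) (fun p => by simp)

noncomputable def diffOrbitSubmonoid (f : MvPolynomial (G × Fin n) A) :
    Submonoid (MvPolynomial (G × Fin n) A) :=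
  Submonoid.closure (Set.range fun σ : G => diffAct σ f)

lemma diffAct_mem_diffOrbitSubmonoid (f : MvPolynomial (G × Fin n) A) (σ : G) :
    diffAct σ f ∈ diffOrbitSubmonoid f :=
  Submonoid.subset_closure ⟨σ, rfl⟩

lemma diffOrbitSubmonoid_le_comap (f : MvPolynomial (G × Fin n) A) (σ : G) :
    diffOrbitSubmonoid f ≤ (diffOrbitSubmonoid f).comap (diffAct σ) :=
  Submonoid.closure_le.mpr <| Set.range_subset_iff.mpr fun τ => by
    simpa [diffAct_diffAct] using diffAct_mem_diffOrbitSubmonoid f (σ * τ)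

lemma exists_eq_prod_of_mem_diffOrbitSubmonoid {f u : MvPolynomial (G × Fin n) A}
    (hu : u ∈ diffOrbitSubmonoid f) : ∃ (m : ℕ) (τ : Fin m → G), u = ∏ i, diffAct (τ i) f := by
  obtain ⟨l, hl, rfl⟩ := Submonoid.exists_list_of_mem_closure hu
  choose τ hτ using hl
  exact ⟨l.length, fun i => τ l[i] (List.getElem_mem i.2),
    by simp [hτ, ← List.prod_ofFn]⟩

namespace IsPerfectDiffIdeal

variable {𝔱 : Ideal (MvPolynomial (G × Fin n) A)}

lemma disjoint_diffOrbitSubmonoid (h𝔱 : IsPerfectDiffIdeal 𝔱) {f : MvPolynomial (G × Fin n) A}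
    (hf : f ∉ 𝔱) : Disjoint (diffOrbitSubmonoid f : Set (MvPolynomial (G × Fin n) A)) 𝔱 := by
  refine Set.disjoint_left.mpr fun u hu hu𝔱 => hf ?_
  obtain ⟨m, τ, rfl⟩ := exists_eq_prod_of_mem_diffOrbitSubmonoid hu
  exact h𝔱.2 f m τ (fun _ => 1) (fun _ => le_rfl) (by simpa using hu𝔱)

lemma exists_mul_mem_of_mul_prod_mem (h𝔱 : IsPerfectDiffIdeal 𝔱)
    {S : Submonoid (MvPolynomial (G × Fin n) A)} (hS : ∀ σ, S ≤ S.comap (diffAct σ))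
    {u : MvPolynomial (G × Fin n) A} (hu : u ∈ S) (a : MvPolynomial (G × Fin n) A) {m : ℕ}
    (σ : Fin m → G) (k : Fin m → ℕ) (hk : ∀ i, 1 ≤ k i)
    (h : u * ∏ i, diffAct (σ i) a ^ k i ∈ 𝔱) : ∃ t ∈ S, t * a ∈ 𝔱 := by
  cases m with
  | zero => exact ⟨u, hu, 𝔱.mul_mem_right a (by simpa using h)⟩
  | succ m =>
    refine ⟨diffAct (σ 0)⁻¹ u, hS _ hu, h𝔱.2 _ _ σ k hk (Ideal.mem_of_dvd _ ?_ h)⟩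
    have hu_dvd : u ∣ ∏ i, diffAct (σ i) (diffAct (σ 0)⁻¹ u) ^ k i := by
      refine dvd_trans ?_ (Finset.dvd_prod_of_mem _ (Finset.mem_univ 0))
      rw [diffAct_diffAct, mul_inv_cancel, diffAct_one_apply]
      exact dvd_pow_self u (Nat.one_le_iff_ne_zero.mp (hk 0))
    simpa only [map_mul, mul_pow, Finset.prod_mul_distrib] using mul_dvd_mul_right hu_dvd _

end IsPerfectDiffIdeal


section Localization

variable {S : Submonoid (MvPolynomial (G × Fin n) A)}

noncomputable def locDiffAct (hS : ∀ σ, S ≤ S.comap (diffAct σ)) (σ : G) :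
    Localization S →+* Localization S :=
  IsLocalization.map _ (diffAct σ) (hS σ)

lemma locDiffAct_algebraMap (hS : ∀ σ, S ≤ S.comap (diffAct σ)) (σ : G)
    (p : MvPolynomial (G × Fin n) A) :
    locDiffAct hS σ (algebraMap _ _ p) = algebraMap _ _ (diffAct σ p) :=
  IsLocalization.map_eq _ _

namespace IsDiffIdeal

variable {𝔱 : Ideal (MvPolynomial (G × Fin n) A)}

lemma locDiffAct_mem_map (h𝔱 : IsDiffIdeal 𝔱) (hS : ∀ σ, S ≤ S.comap (diffAct σ))
    (σ : G) {z : Localization S} (hz : z ∈ 𝔱.map (algebraMap _ _)) :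
    locDiffAct hS σ z ∈ 𝔱.map (algebraMap _ _) := by
  have hcomp : (locDiffAct hS σ).comp (algebraMap _ _) = (algebraMap _ _).comp (diffAct σ) :=
    RingHom.ext (locDiffAct_algebraMap hS σ)
  have hle : (𝔱.map (algebraMap _ _)).map (locDiffAct hS σ) ≤ 𝔱.map (algebraMap _ _) := by
    rw [Ideal.map_map, hcomp, ← Ideal.map_map]
    exact Ideal.map_mono (Ideal.map_le_of_le_comap fun p hp => h𝔱 σ p hp)
  exact hle (Ideal.mem_map_of_mem _ hz)

end IsDiffIdeal

namespace IsPerfectDiffIdeal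

variable {𝔱 : Ideal (MvPolynomial (G × Fin n) A)}

lemma mem_map_of_prod_locDiffAct_mem (h𝔱 : IsPerfectDiffIdeal 𝔱)
    (hS : ∀ σ, S ≤ S.comap (diffAct σ)) (z : Localization S) (m : ℕ) (σ : Fin m → G)
    (k : Fin m → ℕ) (hk : ∀ i, 1 ≤ k i)
    (h : ∏ i, locDiffAct hS (σ i) z ^ k i ∈ 𝔱.map (algebraMap _ _)) :
    z ∈ 𝔱.map (algebraMap _ _) := by
  obtain ⟨⟨a, s⟩, hz⟩ := IsLocalization.surj S z
  have hprod : (∏ i, locDiffAct hS (σ i) z ^ k i) * algebraMap _ _ (∏ i, diffAct (σ i) s.1 ^ k i)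
      = algebraMap _ _ (∏ i, diffAct (σ i) a ^ k i) := by
    simp only [map_prod, map_pow, ← Finset.prod_mul_distrib, ← mul_pow, ← locDiffAct_algebraMap hS,
      ← map_mul, hz]
  obtain ⟨u, hu, hu𝔱⟩ :=
    (IsLocalization.algebraMap_mem_map_algebraMap_iff S (Localization S) 𝔱 _).mp
      (hprod ▸ Ideal.mul_mem_right _ _ h)
  obtain ⟨t, ht, ht𝔱⟩ := h𝔱.exists_mul_mem_of_mul_prod_mem hS hu a σ k hk hu𝔱
  rw [← Ideal.mul_unit_mem_iff_mem _ (IsLocalization.map_units _ s), hz]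
  exact (IsLocalization.algebraMap_mem_map_algebraMap_iff S (Localization S) 𝔱 _).mpr ⟨t, ht, ht𝔱⟩

end IsPerfectDiffIdeal


end Localization

section Rabinowitsch

noncomputable def rabinowitschHom (f : MvPolynomial (G × Fin n) A) :
    MvPolynomial (G × Fin (n + 1)) A →ₐ[A] Localization (diffOrbitSubmonoid f) :=
  aeval fun p => Fin.lastCases (motive := fun _ => Localization (diffOrbitSubmonoid f))
    (IsLocalization.mk' _ 1 ⟨diffAct p.1 f, diffAct_mem_diffOrbitSubmonoid f p.1⟩)
    (fun i => algebraMap (MvPolynomial (G × Fin n) A) _ (X (p.1, i))) p.2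

variable (f : MvPolynomial (G × Fin n) A)

lemma rabinowitschHom_rename_castSucc (g : MvPolynomial (G × Fin n) A) :
    rabinowitschHom f (rename (Prod.map id Fin.castSucc) g) = algebraMap _ _ g := by
  rw [← AlgHom.comp_apply, ← IsScalarTower.toAlgHom_apply A]
  congr 1
  exact algHom_ext fun p => by simp [rabinowitschHom]

lemma rabinowitschHom_diffAct (σ : G) (p : MvPolynomial (G × Fin (n + 1)) A) :
    rabinowitschHom f (diffAct σ p) =
      locDiffAct (diffOrbitSubmonoid_le_comap f) σ (rabinowitschHom f p) := by
  change ((rabinowitschHom f).toRingHom.comp (diffAct σ)) p =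
    ((locDiffAct (diffOrbitSubmonoid_le_comap f) σ).comp (rabinowitschHom f).toRingHom) p
  congr 1
  refine ringHom_ext (fun a => ?_) (fun ⟨τ, i⟩ => ?_)
  · simp only [RingHom.comp_apply, AlgHom.toRingHom_eq_coe, RingHom.coe_coe, diffAct_C, algHom_C,
      IsScalarTower.algebraMap_apply A (MvPolynomial (G × Fin n) A), locDiffAct_algebraMap,
      algebraMap_eq]
  · induction i using Fin.lastCases with
    | last => simp [rabinowitschHom, locDiffAct, IsLocalization.map_mk', diffAct_diffAct]
    | cast i => simp [rabinowitschHom, locDiffAct_algebraMap]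

lemma rabinowitschHom_X_last_mul :
    rabinowitschHom f (X (1, Fin.last n) * rename (Prod.map id Fin.castSucc) f) = 1 := by
  rw [map_mul, rabinowitschHom_rename_castSucc]
  simp [rabinowitschHom, diffAct_one_apply]

end Rabinowitsch


namespace IsPerfectDiffIdeal

variable {𝔱 : Ideal (MvPolynomial (G × Fin n) A)}

lemma exists_rabinowitsch (h𝔱 : IsPerfectDiffIdeal 𝔱) {f : MvPolynomial (G × Fin n) A}
    (hf : f ∉ 𝔱) :
    ∃ 𝔮 : Ideal (MvPolynomial (G × Fin (n + 1)) A), IsPerfectDiffIdeal 𝔮 ∧ 𝔮 ≠ ⊤ ∧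
      (∀ g ∈ 𝔱, rename (Prod.map id Fin.castSucc) g ∈ 𝔮) ∧
      X (1, Fin.last n) * rename (Prod.map id Fin.castSucc) f - 1 ∈ 𝔮 := by
  set 𝔱' := 𝔱.map (algebraMap _ (Localization (diffOrbitSubmonoid f)))
  have hS := diffOrbitSubmonoid_le_comap f
  refine ⟨𝔱'.comap (rabinowitschHom f), ⟨fun σ p hp => ?_, fun g m σ k hk hg => ?_⟩, ?_, ?_, ?_⟩
  · rw [Ideal.mem_comap, rabinowitschHom_diffAct]
    exact h𝔱.1.locDiffAct_mem_map hS σ hp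
  · refine h𝔱.mem_map_of_prod_locDiffAct_mem hS _ m σ k hk ?_
    simpa only [Ideal.mem_comap, map_prod, map_pow, rabinowitschHom_diffAct] using hg
  · rw [Ne, Ideal.comap_eq_top_iff]
    exact (IsLocalization.map_algebraMap_ne_top_iff_disjoint _ _ 𝔱).mpr
      (h𝔱.disjoint_diffOrbitSubmonoid hf)
  · intro g hg
    rw [Ideal.mem_comap, rabinowitschHom_rename_castSucc]
    exact Ideal.mem_map_of_mem _ hg
  · rw [Ideal.mem_comap, map_sub, rabinowitschHom_X_last_mul, map_one, sub_self]
    exact 𝔱'.zero_mem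

end IsPerfectDiffIdeal

end DiffAct

/-- Strong Nullstellensatz for a differencly closed field: every perfect difference
ideal `𝔱 ⊆ K{y₁,…,yₙ}` satisfies `𝔱 = I(V(𝔱))`. -/
theorem stmt12 {G K : Type u} [Group G] [Field K] [MulSemiringAction G K]
    (hclosed : ∀ (m : ℕ) (𝔞 : Ideal (MvPolynomial (G × Fin m) K)),
      IsPerfectDiffIdeal 𝔞 → 𝔞 ≠ ⊤ →
        ∃ x : Fin m → K, ∀ f ∈ 𝔞, aeval (fun p : G × Fin m => p.1 • x p.2) f = 0)
    (n : ℕ) (𝔱 : Ideal (MvPolynomial (G × Fin n) K)) (h𝔱 : IsPerfectDiffIdeal 𝔱) :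
    ∀ f : MvPolynomial (G × Fin n) K,
      f ∈ 𝔱 ↔ ∀ x : Fin n → K,
        (∀ g ∈ 𝔱, aeval (fun p : G × Fin n => p.1 • x p.2) g = 0) →
        aeval (fun p : G × Fin n => p.1 • x p.2) f = 0 := by
  intro f
  refine ⟨fun hf x hx => hx f hf, fun hV => by_contra fun hf => ?_⟩
  obtain ⟨𝔮, h𝔮, h𝔮_ne_top, h𝔱𝔮, hf𝔮⟩ := h𝔱.exists_rabinowitsch hf
  obtain ⟨x, hx⟩ := hclosed (n + 1) 𝔮 h𝔮 h𝔮_ne_top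
  have hcomp : (fun p : G × Fin (n + 1) => p.1 • x p.2) ∘ Prod.map id Fin.castSucc =
      fun p => p.1 • (x ∘ Fin.castSucc) p.2 := rfl
  have hx𝔱 : ∀ g ∈ 𝔱, aeval (fun p : G × Fin n => p.1 • (x ∘ Fin.castSucc) p.2) g = 0 :=
    fun g hg => by simpa only [aeval_rename, hcomp] using hx _ (h𝔱𝔮 g hg)
  have h1 := hx _ hf𝔮
  rw [map_sub, map_mul, aeval_rename, hcomp, hV _ hx𝔱, mul_zero, map_one, zero_sub,
    neg_eq_zero] at h1
  exact one_ne_zero h1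
end

section
/- Let Σ be an infinite group, κ the cardinality of the set of ultrafilters on Σ, and K a pseudofield. Then every radical difference ideal 𝔱 of K{y₁,…,yₙ} can be written as 𝔱 = r([E]) for some subset E with |E| ≤ |Σ|·κ, where [E] is the difference ideal generated by E and r denotes the radical. -/
open MvPolynomial

universe u v

variable {G : Type u} [Group G]

/-- The smallest difference ideal containing `E`. -/
noncomputable def diffSpan {G A : Type u} [Group G] [CommRing A] [MulSemiringAction G A]
    {n : ℕ} (E : Set (MvPolynomial (G × Fin n) A)) : Ideal (MvPolynomial (G × Fin n) A) :=
  Ideal.span (⋃ σ : G, diffAct σ '' E)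

/-!
A pseudofield `K` is von Neumann regular, so its primes are maximal and every residue ring
`K ⧸ 𝔭` is a field. By the Hilbert basis theorem, applied to finitely many variables at a time,
the image of `𝔱` in `(K ⧸ 𝔭){y₁,…,yₙ}` is generated by at most `|Σ|` elements; lifting them to `𝔱`
for every prime `𝔭` gives `E ⊆ 𝔱`, and a prime `Q ⊇ E` contains `𝔱` because `𝔱` is generated by
the lifts for `𝔭 = Q ∩ K` modulo `𝔭`. Hence `𝔱 = r(E) = r([E])`.

It remains to bound the number of primes of `K` by `κ`. Fix a maximal ideal `𝔪`. For a prime `𝔮`,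
the sets `{σ | σ a ∈ 𝔪}`, `a ∈ 𝔮`, are nonempty because `K` is simple and `a` generates the same
ideal as an idempotent `≠ 1`, and they are directed because any two elements of `𝔮` are fixed by
multiplication with a common element of `𝔮`. An ultrafilter `u` containing all of them gives
`𝔮 ≤ {a | σ a ∈ 𝔪 for u-almost all σ}`, a prime, hence equal to the maximal ideal `𝔮`.
-/

open Cardinal

section Regular

variable {R : Type*} [CommRing R]

theorem Ring.krullDimLE_zero_of_regular (hreg : ∀ a : R, ∃ x, a * x * a = a) :
    Ring.KrullDimLE 0 R := by
  refine .mk₀ fun p hp => Ideal.isMaximal_iff.2 ⟨(Ideal.ne_top_iff_one p).1 hp.ne_top, ?_⟩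
  intro J a hpJ ha haJ
  obtain ⟨x, hx⟩ := hreg a
  have hzero : a * (1 - x * a) = 0 := by linear_combination -hx
  have hinv : 1 - x * a ∈ p := (hp.mem_or_mem (hzero ▸ p.zero_mem)).resolve_left ha
  simpa using J.add_mem (J.mul_mem_left x haJ) (hpJ hinv)

theorem exists_mem_mul_eq_self_and_mul_eq_self (hreg : ∀ a : R, ∃ x, a * x * a = a)
    {I : Ideal R} {a b : R} (ha : a ∈ I) (hb : b ∈ I) : ∃ c ∈ I, c * a = a ∧ c * b = b := by
  obtain ⟨x, hx⟩ := hreg a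
  obtain ⟨y, hy⟩ := hreg b
  refine ⟨a * x + b * y - a * x * (b * y),
    I.sub_mem (I.add_mem (I.mul_mem_right x ha) (I.mul_mem_right y hb))
      (I.mul_mem_right _ (I.mul_mem_right x ha)), ?_, ?_⟩
  · linear_combination (1 - b * y) * hx
  · linear_combination (1 - a * x) * hy

end Regular

namespace Ideal

variable {K : Type*} [CommRing K] [MulSemiringAction G K]

variable (G) in
def stableCore (p : Ideal K) : Ideal K :=
  ⨅ σ : G, p.comap (MulSemiringAction.toRingHom G K σ)

theorem mem_stableCore {p : Ideal K} {a : K} : a ∈ stableCore G p ↔ ∀ σ : G, σ • a ∈ p := by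
  simp [stableCore]

theorem isStableIdeal_stableCore (p : Ideal K) : IsStableIdeal G (stableCore G p) :=
  fun τ _ ha => mem_stableCore.2 fun σ => by rw [smul_smul]; exact mem_stableCore.1 ha (σ * τ)

theorem stableCore_le (p : Ideal K) : stableCore G p ≤ p :=
  fun a ha => one_smul G a ▸ mem_stableCore.1 ha 1

theorem stableCore_eq_bot (hK : IsSimpleDiffRing G K) {p : Ideal K} (hp : p ≠ ⊤) :
    stableCore G p = ⊥ :=
  (hK.2 _ (isStableIdeal_stableCore p)).resolve_right
    fun h => hp (top_le_iff.1 (h ▸ stableCore_le p))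

theorem exists_smul_mem_of_isIdempotentElem (hK : IsSimpleDiffRing G K) {p : Ideal K}
    (hp : p.IsPrime) {e : K} (he : IsIdempotentElem e) (he1 : e ≠ 1) : ∃ σ : G, σ • e ∈ p := by
  by_contra! h
  have hcore : 1 - e ∈ stableCore G p := mem_stableCore.2 fun σ => by
    have hzero : σ • (1 - e) * σ • e = 0 := by rw [← smul_mul', sub_mul, one_mul, he.eq,
      sub_self, smul_zero]
    exact (hp.mem_or_mem (hzero ▸ p.zero_mem)).resolve_right (h σ)
  rw [stableCore_eq_bot hK hp.ne_top, mem_bot, sub_eq_zero] at hcore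
  exact he1 hcore.symm

theorem exists_smul_mem_of_mem (hK : IsPseudofield G K) {p q : Ideal K} (hp : p.IsPrime)
    (hq : q ≠ ⊤) {a : K} (ha : a ∈ q) : ∃ σ : G, σ • a ∈ p := by
  obtain ⟨x, hx⟩ := hK.2 a
  have he : IsIdempotentElem (a * x) := by
    rw [IsIdempotentElem, ← mul_assoc, hx]
  have he1 : a * x ≠ 1 := fun h => hq ((eq_top_iff_one q).2 (h ▸ q.mul_mem_right x ha))
  obtain ⟨σ, hσ⟩ := exists_smul_mem_of_isIdempotentElem hK.1 hp he he1
  exact ⟨σ, hx ▸ smul_mul' σ (a * x) a ▸ p.mul_mem_right _ hσ⟩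

def ultralimit (p : Ideal K) (u : Ultrafilter G) : Ideal K where
  carrier := {a | ∀ᶠ σ in (u : Filter G), σ • a ∈ p}
  add_mem' ha hb := (ha.and hb).mono fun σ h => by rw [smul_add]; exact p.add_mem h.1 h.2
  zero_mem' := .of_forall fun σ => by simp
  smul_mem' c _ ha := ha.mono fun σ h => by rw [smul_eq_mul, smul_mul']; exact p.mul_mem_left _ h

theorem mem_ultralimit {p : Ideal K} {u : Ultrafilter G} {a : K} :
    a ∈ p.ultralimit u ↔ ∀ᶠ σ in (u : Filter G), σ • a ∈ p := Iff.rfl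

theorem isPrime_ultralimit {p : Ideal K} (hp : p.IsPrime) (u : Ultrafilter G) :
    (p.ultralimit u).IsPrime := by
  refine isPrime_iff.2 ⟨fun h => ?_, fun {a b} hab => ?_⟩
  · obtain ⟨σ, hσ⟩ := (mem_ultralimit.1 ((eq_top_iff_one _).1 h)).exists
    rw [smul_one] at hσ
    exact hp.ne_top ((eq_top_iff_one p).2 hσ)
  · simp only [mem_ultralimit, ← Ultrafilter.eventually_or]
    exact hab.mono fun σ h => hp.mem_or_mem (smul_mul' σ a b ▸ h)

theorem exists_le_ultralimit (hK : IsPseudofield G K) {p q : Ideal K} (hp : p.IsPrime)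
    (hq : q ≠ ⊤) : ∃ u : Ultrafilter G, q ≤ p.ultralimit u := by
  let A : q → Filter G := fun a => Filter.principal {σ | σ • (a : K) ∈ p}
  have hdir : Directed (· ≥ ·) A := fun a b => by
    obtain ⟨c, hc, hca, hcb⟩ := exists_mem_mul_eq_self_and_mul_eq_self hK.2 a.2 b.2
    have hsub : ∀ d : K, c * d = d → A ⟨c, hc⟩ ≤ Filter.principal {σ | σ • d ∈ p} :=
      fun d hcd => Filter.principal_mono.2 fun σ hσ => by
        show σ • d ∈ p
        rw [← hcd, smul_mul']; exact p.mul_mem_right _ hσ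
    exact ⟨⟨c, hc⟩, hsub a hca, hsub b hcb⟩
  have hA : (⨅ a, A a).NeBot := Filter.iInf_neBot_of_directed' hdir
    fun a => Filter.principal_neBot_iff.2 (exists_smul_mem_of_mem hK hp hq a.2)
  exact ⟨@Ultrafilter.of _ _ hA, fun a ha =>
    Ultrafilter.of_le _ (Filter.mem_iInf_of_mem ⟨a, ha⟩ (Filter.mem_principal_self _))⟩

end Ideal

theorem mk_primeSpectrum_le_mk_ultrafilter {K : Type u} [CommRing K] [MulSemiringAction G K]
    (hK : IsPseudofield G K) : #(PrimeSpectrum K) ≤ #(Ultrafilter G) := by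
  have := hK.1.1
  have := Ring.krullDimLE_zero_of_regular hK.2
  obtain ⟨p, hp⟩ := Ideal.exists_maximal K
  refine mk_le_of_surjective (f := fun u => ⟨p.ultralimit u, Ideal.isPrime_ultralimit hp.isPrime u⟩)
    fun q => ?_
  obtain ⟨u, hu⟩ := Ideal.exists_le_ultralimit hK hp.isPrime q.isPrime.ne_top
  exact ⟨u, PrimeSpectrum.ext
    (q.isPrime.isMaximal'.eq_of_le (Ideal.isPrime_ultralimit hp.isPrime u).ne_top hu).symm⟩

namespace MvPolynomial

theorem exists_ideal_span_eq_mk_le {V k : Type u} [CommRing k] [IsNoetherianRing k]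
    (I : Ideal (MvPolynomial V k)) :
    ∃ s ⊆ (I : Set (MvPolynomial V k)), #s ≤ max ℵ₀ #V ∧ Ideal.span s = I := by
  classical
  have hfg : ∀ S : Finset V, ∃ t : Finset (MvPolynomial S k),
      Ideal.span (t : Set (MvPolynomial S k)) = I.comap (rename ((↑) : S → V)) :=
    fun S => IsNoetherian.noetherian (I.comap (rename ((↑) : S → V)))
  choose t ht using hfg
  set gens : Finset V → Set (MvPolynomial V k) :=
    fun S => rename ((↑) : S → V) '' (t S : Set (MvPolynomial S k))
  have hgens_sub : ∀ S, gens S ⊆ I := fun S =>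
    Set.image_subset_iff.2 fun g hg => (ht S ▸ Ideal.subset_span hg : g ∈ I.comap _)
  refine ⟨⋃ S, gens S, Set.iUnion_subset hgens_sub, ?_, ?_⟩
  · calc #(⋃ S, gens S) ≤ #(Finset V) * ⨆ S, #(gens S) := mk_iUnion_le gens
      _ ≤ max ℵ₀ #V * ℵ₀ := by
        gcongr
        · exact (mk_le_of_surjective List.toFinset_surjective).trans (mk_list_le_max V)
        · exact ciSup_le' fun S => ((t S).finite_toSet.image _).lt_aleph0.le
      _ = max ℵ₀ #V := mul_aleph0_eq (le_max_left _ _)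
  · refine le_antisymm (Ideal.span_le.2 (Set.iUnion_subset hgens_sub)) fun f hf => ?_
    obtain ⟨g, hg⟩ := exists_rename_eq_of_vars_subset_range f ((↑) : f.vars → V)
      Subtype.val_injective (by simp)
    have hg_span : g ∈ Ideal.span (t f.vars : Set (MvPolynomial f.vars k)) :=
      (ht f.vars).symm ▸ (show rename _ g ∈ I by rwa [hg])
    have := Ideal.mem_map_of_mem (rename ((↑) : f.vars → V)) hg_span
    rw [Ideal.map_span, hg] at this
    exact Ideal.span_mono (Set.subset_iUnion gens f.vars) this

theorem mem_of_map_mem_map_mk_comap_C {K V : Type*} [CommRing K]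
    {Q J : Ideal (MvPolynomial V K)} (hJ : J ≤ Q) {f : MvPolynomial V K}
    (hf : map (Ideal.Quotient.mk (Q.comap C)) f ∈ J.map (map (Ideal.Quotient.mk (Q.comap C)))) :
    f ∈ Q := by
  rw [← Ideal.mem_comap, Ideal.comap_map_of_surjective (map (Ideal.Quotient.mk (Q.comap C)))
    (map_surjective _ Ideal.Quotient.mk_surjective), ← RingHom.ker_eq_comap_bot, ker_map,
    Ideal.mk_ker] at hf
  exact sup_le hJ Ideal.map_comap_le hf

theorem exists_radical_span_eq {V K : Type u} [CommRing K] [Ring.KrullDimLE 0 K]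
    {𝔱 : Ideal (MvPolynomial V K)} (h𝔱 : 𝔱.IsRadical) :
    ∃ E ⊆ (𝔱 : Set (MvPolynomial V K)),
      #E ≤ #(PrimeSpectrum K) * max ℵ₀ #V ∧ (Ideal.span E).radical = 𝔱 := by
  have hlift : ∀ p : PrimeSpectrum K, ∃ E ⊆ (𝔱 : Set (MvPolynomial V K)), #E ≤ max ℵ₀ #V ∧
      Ideal.span (map (Ideal.Quotient.mk p.asIdeal) '' E) =
        𝔱.map (map (Ideal.Quotient.mk p.asIdeal)) := by
    intro p
    let := Ideal.Quotient.field p.asIdeal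
    obtain ⟨s, hs𝔱, hscard, hspan⟩ :=
      exists_ideal_span_eq_mk_le (𝔱.map (map (Ideal.Quotient.mk p.asIdeal)))
    have hsurj : Set.SurjOn (map (Ideal.Quotient.mk p.asIdeal)) 𝔱 s := fun y hy =>
      (Ideal.mem_map_iff_of_surjective _ (map_surjective _ Ideal.Quotient.mk_surjective)).1
        (hs𝔱 hy)
    obtain ⟨E, hE𝔱, hbij⟩ := hsurj.exists_bijOn_subset
    refine ⟨E, hE𝔱, ?_, hbij.image_eq ▸ hspan⟩
    rw [← mk_image_eq_of_injOn _ _ hbij.injOn, hbij.image_eq]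
    exact hscard
  choose E hE𝔱 hEcard hEspan using hlift
  refine ⟨⋃ p, E p, Set.iUnion_subset hE𝔱,
    (mk_iUnion_le E).trans (by gcongr; exact ciSup_le' hEcard),
    le_antisymm (h𝔱.radical_le_iff.2 (Ideal.span_le.2 (Set.iUnion_subset hE𝔱))) fun f hf => ?_⟩
  rw [Ideal.radical_eq_sInf, Ideal.mem_sInf]
  rintro Q ⟨hQ, hQprime⟩
  let p : PrimeSpectrum K := ⟨Q.comap C, hQprime.comap C⟩
  refine mem_of_map_mem_map_mk_comap_C ((Ideal.span_mono (Set.subset_iUnion E p)).trans hQ) ?_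
  rw [Ideal.map_span, hEspan p]
  exact Ideal.mem_map_of_mem _ hf

end MvPolynomial

section DiffSpan

variable {A : Type u} [CommRing A] [MulSemiringAction G A] {n : ℕ}

theorem diffAct_one (f : MvPolynomial (G × Fin n) A) : diffAct (1 : G) f = f := by
  have h1 : MulSemiringAction.toRingHom G A 1 = RingHom.id A := RingHom.ext (one_smul G)
  simp only [diffAct, h1, one_mul, map_id, RingHom.comp_apply]
  exact rename_id_apply f

theorem span_le_diffSpan (E : Set (MvPolynomial (G × Fin n) A)) : Ideal.span E ≤ diffSpan E :=
  Ideal.span_mono fun f hf => Set.mem_iUnion.2 ⟨1, f, hf, diffAct_one f⟩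

theorem diffSpan_le {E : Set (MvPolynomial (G × Fin n) A)} {I : Ideal (MvPolynomial (G × Fin n) A)}
    (hI : IsDiffIdeal I) (hE : E ⊆ I) : diffSpan E ≤ I :=
  Ideal.span_le.2 <| Set.iUnion_subset fun σ => Set.image_subset_iff.2 fun f hf => hI σ f (hE hf)

end DiffSpan

/-- For an infinite group `G` with `κ` ultrafilters and a pseudofield `K`, every
radical difference ideal of `K{y₁,…,yₙ}` is the radical of a difference ideal
generated by at most `|G|·κ` elements. -/
theorem stmt19 {G K : Type u} [Group G] [Infinite G] [CommRing K] [MulSemiringAction G K]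
    (hK : IsPseudofield G K) (n : ℕ)
    (𝔱 : Ideal (MvPolynomial (G × Fin n) K)) (h1 : IsDiffIdeal 𝔱) (h2 : 𝔱.IsRadical) :
    ∃ E : Set (MvPolynomial (G × Fin n) K),
      Cardinal.mk E ≤ Cardinal.mk G * Cardinal.mk (Ultrafilter G) ∧
      𝔱 = (diffSpan E).radical := by
  have := Ring.krullDimLE_zero_of_regular hK.2
  obtain ⟨E, hE𝔱, hEcard, hErad⟩ := MvPolynomial.exists_radical_span_eq h2
  have hvars : max ℵ₀ #(G × Fin n) ≤ #G := by
    refine max_le (aleph0_le_mk G) ?_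
    rw [mk_prod, lift_uzero, mk_fin, lift_natCast]
    exact (mul_le_max_of_aleph0_le_left (aleph0_le_mk G)).trans
      (max_le le_rfl ((natCast_lt_aleph0 (n := n)).le.trans (aleph0_le_mk G)))
  refine ⟨E, ?_, le_antisymm ?_ ?_⟩
  · calc #E ≤ #(PrimeSpectrum K) * max ℵ₀ #(G × Fin n) := hEcard
      _ ≤ #(Ultrafilter G) * #G := mul_le_mul' (mk_primeSpectrum_le_mk_ultrafilter hK) hvars
      _ = #G * #(Ultrafilter G) := mul_comm _ _
  · exact hErad ▸ Ideal.radical_mono (span_le_diffSpan E)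
  · exact h2.radical_le_iff.2 (diffSpan_le h1 hE𝔱)
end
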